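/- arXiv:gr-qc/0102047 — 2 statements merged into one kernel-verified Lean document; each statement's English description precedes it below -/
import Mathlib

section
/- Let m ∈ ℕ and let s be a negative integer such that |s| is odd and m + s ≥ 0. Then for every q ∈ 𝒫_m there exists a unique p ∈ 𝒫_m such that Δ(‖x‖^s p(x)) = ‖x‖^{s−2} q(x) for all x ∈ ℝ³ with x ≠ 0; equivalently, the linear map 𝒫_m → 𝒫_m sending p to s(s+1+2m) p + ‖x‖² Δp is bijective. -/
noncomputable section

/-- ℝ³ with the Euclidean norm. -/
abbrev E3 := EuclideanSpace ℝ (Fin 3)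

/-- The `i`-th partial derivative of a function on ℝ³. -/
def pd (i : Fin 3) (f : E3 → ℝ) : E3 → ℝ :=
  fun x => fderiv ℝ f x (EuclideanSpace.single i 1)

/-- The flat Laplacian on ℝ³. -/
def lap (f : E3 → ℝ) : E3 → ℝ :=
  fun x => ∑ i : Fin 3, pd i (pd i f) x

/-- `p : ℝ³ → ℝ` is (the evaluation of) a homogeneous polynomial of degree `m`
in the three coordinates. -/
def IsHomogPoly (m : ℕ) (p : E3 → ℝ) : Prop :=
  ∃ P : MvPolynomial (Fin 3) ℝ, P.IsHomogeneous m ∧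
    ∀ x : E3, p x = MvPolynomial.eval (fun i => x i) P

/-!
Write `r = ‖x‖` and let `P` be homogeneous of degree `m` in `n` variables. Differentiating
`r^s P` twice gives `Δ(r^s P) = r^(s-2) T_s P` away from the origin, where
`T_s P = s(s + n - 2 + 2m) P + r² ΔP` preserves degree `m`. Since the space of such `P` is
finite-dimensional, it suffices that `T_s` is injective there. Applying `Δ` to `T_s P = 0` and
using `Δ(r² Q) = (4d + 2n) Q + r² ΔQ` for `Q` of degree `d` gives `T_{s+2} (ΔP) = 0` in degree
`m - 2`, so `ΔP = 0` by induction on `m`; then `s(s + n - 2 + 2m) P = 0`, and this constant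
is nonzero because `s` is odd and `m + s ≥ 0`, `n ≥ 3`.
-/

open MvPolynomial

namespace MvPolynomial

variable {σ R : Type*} [CommRing R]

theorem pderiv_eq_zero_of_isHomogeneous_zero {P : MvPolynomial σ R} (hP : P.IsHomogeneous 0)
    (i : σ) : pderiv i P = 0 := by
  rw [totalDegree_eq_zero_iff_eq_C.mp (Nat.le_zero.mp hP.totalDegree_le), pderiv_C]

theorem eq_of_eval_eq_of_ne_zero [IsDomain R] [Infinite R] [Nonempty σ]
    {P Q : MvPolynomial σ R} (h : ∀ x : σ → R, x ≠ 0 → eval x P = eval x Q) : P = Q := by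
  obtain ⟨i⟩ := ‹Nonempty σ›
  have hX : X i * (P - Q) = 0 := funext fun x => by
    by_cases hx : x = 0
    · simp [hx]
    · simp [h x hx]
  exact sub_eq_zero.mp ((mul_eq_zero.mp hX).resolve_left (X_ne_zero i))

variable [Fintype σ]

def laplacian : MvPolynomial σ R →ₗ[R] MvPolynomial σ R :=
  ∑ i, (pderiv i).toLinearMap ∘ₗ (pderiv i).toLinearMap

theorem laplacian_apply (P : MvPolynomial σ R) :
    laplacian P = ∑ i, pderiv i (pderiv i P) := by
  simp [laplacian]

def normSq : MvPolynomial σ R := ∑ i, X i ^ 2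

theorem pderiv_normSq (i : σ) : pderiv i (normSq : MvPolynomial σ R) = 2 * X i := by
  classical
  simp [normSq, pderiv_X, Pi.single_apply]

theorem isHomogeneous_normSq : (normSq : MvPolynomial σ R).IsHomogeneous 2 :=
  IsHomogeneous.sum _ _ _ fun i _ => (isHomogeneous_X R i).pow 2

theorem IsHomogeneous.laplacian {P : MvPolynomial σ R} {m : ℕ} (hP : P.IsHomogeneous m) :
    (laplacian P).IsHomogeneous (m - 2) := by
  rw [laplacian_apply]
  refine IsHomogeneous.sum _ _ _ fun i _ => ?_
  simpa [Nat.sub_sub] using (hP.pderiv (i := i)).pderiv (i := i)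

theorem laplacian_eq_zero_of_lt_two {P : MvPolynomial σ R} {m : ℕ} (hP : P.IsHomogeneous m)
    (hm : m < 2) : laplacian P = 0 := by
  rw [laplacian_apply]
  refine Finset.sum_eq_zero fun i _ => pderiv_eq_zero_of_isHomogeneous_zero ?_ i
  simpa [show m - 1 = 0 by omega] using hP.pderiv (i := i)

theorem laplacian_normSq_mul {Q : MvPolynomial σ R} {d : ℕ} (hQ : Q.IsHomogeneous d) :
    laplacian (normSq * Q) =
      ((4 * d + 2 * Fintype.card σ : ℕ) : MvPolynomial σ R) * Q + normSq * laplacian Q := by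
  have hi (i : σ) : pderiv i (pderiv i (normSq * Q)) =
      2 * Q + 4 * (X i * pderiv i Q) + normSq * pderiv i (pderiv i Q) := by
    have h2 : pderiv i (2 : MvPolynomial σ R) = 0 := by simpa using (pderiv i).map_natCast 2
    simp only [Derivation.leibniz, pderiv_normSq, smul_eq_mul, map_add, pderiv_X_self, h2]
    ring
  simp only [laplacian_apply, hi, Finset.sum_add_distrib, ← Finset.mul_sum, hQ.sum_X_mul_pderiv,
    Finset.sum_const, Finset.card_univ, nsmul_eq_mul]
  push_cast
  ring

/-- `r^(2-s) Δ(r^s P)` for `P` homogeneous of degree `m`, where `r² = normSq`. -/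
def twistedLaplacian (s : ℤ) (m : ℕ) : MvPolynomial σ R →ₗ[R] MvPolynomial σ R :=
  (s * (s + Fintype.card σ - 2 + 2 * m)) • LinearMap.id +
    LinearMap.mulLeft R normSq ∘ₗ laplacian

theorem twistedLaplacian_apply (s : ℤ) (m : ℕ) (P : MvPolynomial σ R) :
    twistedLaplacian s m P =
      ((s * (s + Fintype.card σ - 2 + 2 * m) : ℤ) : MvPolynomial σ R) * P +
        normSq * laplacian P := by
  simp only [twistedLaplacian, LinearMap.add_apply, LinearMap.smul_apply, LinearMap.id_apply,
    LinearMap.comp_apply, LinearMap.mulLeft_apply]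
  rw [zsmul_eq_mul]

theorem IsHomogeneous.twistedLaplacian {P : MvPolynomial σ R} {m : ℕ}
    (hP : P.IsHomogeneous m) (s : ℤ) : (twistedLaplacian s m P).IsHomogeneous m := by
  rw [twistedLaplacian_apply, ← map_intCast (C : R →+* MvPolynomial σ R)]
  refine (hP.C_mul _).add ?_
  rcases lt_or_ge m 2 with hm | hm
  · simpa [laplacian_eq_zero_of_lt_two hP hm] using isHomogeneous_zero σ R m
  · simpa [Nat.add_sub_cancel' hm] using isHomogeneous_normSq.mul hP.laplacian

/-- `∂ᵢ(r^t Q) = r^(t-2) · pderivRadial t i Q`, where `r² = normSq`. -/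
def pderivRadial (t : ℤ) (i : σ) (Q : MvPolynomial σ R) : MvPolynomial σ R :=
  t • (X i * Q) + normSq * pderiv i Q

theorem sum_pderivRadial_pderivRadial (t : ℤ) {Q : MvPolynomial σ R} {m : ℕ}
    (hQ : Q.IsHomogeneous m) :
    ∑ i, pderivRadial (t - 2) i (pderivRadial t i Q) = normSq * twistedLaplacian t m Q := by
  have hi (i : σ) : pderivRadial (t - 2) i (pderivRadial t i Q) =
      (((t - 2) * t : ℤ) : MvPolynomial σ R) * (X i ^ 2 * Q) +
        ((2 * t : ℤ) : MvPolynomial σ R) * normSq * (X i * pderiv i Q) +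
        (t : MvPolynomial σ R) * normSq * Q + normSq ^ 2 * pderiv i (pderiv i Q) := by
    simp only [pderivRadial, map_add, map_zsmul, Derivation.leibniz, pderiv_normSq, smul_eq_mul,
      pderiv_X_self]
    simp only [zsmul_eq_mul]
    push_cast
    ring
  simp only [hi, Finset.sum_add_distrib, ← Finset.mul_sum, ← Finset.sum_mul,
    hQ.sum_X_mul_pderiv, Finset.sum_const, Finset.card_univ, nsmul_eq_mul, twistedLaplacian_apply,
    laplacian_apply]
  rw [← normSq]
  push_cast
  ring

theorem eq_zero_of_twistedLaplacian_eq_zero [IsDomain R] [CharZero R]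
    (hσ : 3 ≤ Fintype.card σ) {s : ℤ} (hs : Odd s) {m : ℕ} (hms : 0 ≤ (m : ℤ) + s)
    {P : MvPolynomial σ R} (hP : P.IsHomogeneous m) (h : twistedLaplacian s m P = 0) :
    P = 0 := by
  induction m using Nat.strong_induction_on generalizing s P with
  | _ m ih =>
  have hΔ : laplacian P = 0 := by
    rcases lt_or_ge m 2 with hm | hm
    · exact laplacian_eq_zero_of_lt_two hP hm
    refine ih (m - 2) (by omega) (hs.add_even even_two) (by omega) hP.laplacian ?_
    have := congrArg laplacian h
    rw [twistedLaplacian_apply, map_add, ← zsmul_eq_mul, map_zsmul,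
      laplacian_normSq_mul hP.laplacian, map_zero, zsmul_eq_mul] at this
    rw [twistedLaplacian_apply]
    push_cast [Nat.cast_sub hm] at this ⊢
    linear_combination this
  have hc : (s * (s + Fintype.card σ - 2 + 2 * m) : ℤ) ≠ 0 :=
    mul_ne_zero (by rintro rfl; exact Int.not_odd_zero hs) (by omega)
  rw [twistedLaplacian_apply, hΔ, mul_zero, add_zero] at h
  exact (mul_eq_zero.mp h).resolve_left (by exact_mod_cast hc)

theorem exists_twistedLaplacian_eq {K : Type*} [Field K] [CharZero K]
    (hσ : 3 ≤ Fintype.card σ) {s : ℤ} (hs : Odd s) {m : ℕ} (hms : 0 ≤ (m : ℤ) + s)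
    {Q : MvPolynomial σ K} (hQ : Q.IsHomogeneous m) :
    ∃ P : MvPolynomial σ K, P.IsHomogeneous m ∧ twistedLaplacian s m P = Q := by
  let V := homogeneousSubmodule σ K m
  have : Module.Finite K V := Module.Finite.iff_fg.mpr (homogeneousSubmodule_fg σ K m)
  let T : V →ₗ[K] V := (twistedLaplacian s m).restrict fun P hP => hP.twistedLaplacian s
  have hT : Function.Injective T := by
    refine (injective_iff_map_eq_zero T).mpr fun P hTP => Subtype.ext ?_
    exact eq_zero_of_twistedLaplacian_eq_zero hσ hs hms P.2 (congrArg Subtype.val hTP)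
  obtain ⟨P, hP⟩ := LinearMap.injective_iff_surjective.mp hT ⟨Q, hQ⟩
  exact ⟨P, P.2, congrArg Subtype.val hP⟩

end MvPolynomial

section Calculus

variable {ι : Type*} [Fintype ι]

def evalEuclidean (P : MvPolynomial ι ℝ) : EuclideanSpace ℝ ι → ℝ :=
  fun x => eval (fun i => x i) P

theorem hasFDerivAt_evalEuclidean (P : MvPolynomial ι ℝ) (x : EuclideanSpace ℝ ι) :
    HasFDerivAt (evalEuclidean P)
      (innerSL ℝ (WithLp.toLp 2 fun i => evalEuclidean (pderiv i P) x)) x := by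
  classical
  induction P using MvPolynomial.induction_on with
  | C a =>
    unfold evalEuclidean
    simp only [eval_C]
    refine (hasFDerivAt_const (𝕜 := ℝ) a x).congr_fderiv (ContinuousLinearMap.ext fun v => ?_)
    simp [PiLp.inner_apply]
  | add P Q hP hQ =>
    unfold evalEuclidean at *
    simp only [map_add]
    refine (hP.add hQ).congr_fderiv (ContinuousLinearMap.ext fun v => ?_)
    simp [PiLp.inner_apply, Finset.sum_add_distrib, mul_add]
  | mul_X P n hP =>
    unfold evalEuclidean at *
    simp only [map_mul, eval_X]
    refine (hP.mul (EuclideanSpace.proj (𝕜 := ℝ) (ι := ι) n).hasFDerivAt).congr_fderiv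
      (ContinuousLinearMap.ext fun v => ?_)
    simp only [PiLp.proj_apply, add_apply, smul_apply,
      smul_eq_mul, coe_innerSL_apply, PiLp.inner_apply, RCLike.inner_apply, Real.ringHom_apply,
      Finset.mul_sum, Derivation.leibniz, pderiv_X, Pi.single_apply, apply_ite, mul_one, mul_zero,
      map_add, map_zero, map_mul, eval_X, mul_add, Finset.sum_add_distrib, Finset.sum_ite_eq,
      Finset.mem_univ, ↓reduceIte]
    ring_nf

theorem evalEuclidean_normSq (x : EuclideanSpace ℝ ι) :
    evalEuclidean normSq x = ‖x‖ ^ 2 := by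
  simp [evalEuclidean, normSq, EuclideanSpace.real_norm_sq_eq]

theorem hasFDerivAt_norm_zpow {F : Type*} [NormedAddCommGroup F] [InnerProductSpace ℝ F]
    (t : ℤ) {x : F} (hx : x ≠ 0) :
    HasFDerivAt (fun y : F => ‖y‖ ^ t) ((t * ‖x‖ ^ (t - 2)) • innerSL ℝ x) x := by
  have hrpow (y : F) (k : ℤ) : (‖y‖ ^ 2) ^ ((k : ℝ) / 2) = ‖y‖ ^ k := by
    rw [← Real.rpow_natCast, ← Real.rpow_mul (norm_nonneg y), ← Real.rpow_intCast]
    congr 1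
    push_cast
    ring
  have h := (hasStrictFDerivAt_norm_sq x).hasFDerivAt.rpow_const (p := (t : ℝ) / 2)
    (Or.inl (pow_ne_zero 2 (norm_ne_zero_iff.mpr hx)))
  simp only [hrpow] at h
  rw [show (t : ℝ) / 2 - 1 = ((t - 2 : ℤ) : ℝ) / 2 by push_cast; ring, hrpow] at h
  convert h using 1
  rw [two_smul, smul_add, ← add_smul]
  ring_nf

end Calculus

theorem pd_norm_zpow_mul_evalEuclidean (t : ℤ) (i : Fin 3) (Q : MvPolynomial (Fin 3) ℝ)
    {x : E3} (hx : x ≠ 0) :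
    pd i (fun y => ‖y‖ ^ t * evalEuclidean Q y) x =
      ‖x‖ ^ (t - 2) * evalEuclidean (pderivRadial t i Q) x := by
  have hsplit : ‖x‖ ^ t = ‖x‖ ^ (t - 2) * ‖x‖ ^ 2 := by
    rw [← zpow_natCast, ← zpow_add₀ (norm_ne_zero_iff.mpr hx)]
    norm_num
  rw [pd, ((hasFDerivAt_norm_zpow t hx).fun_mul (hasFDerivAt_evalEuclidean Q x)).fderiv]
  have hN := evalEuclidean_normSq x
  simp only [evalEuclidean] at hN ⊢
  simp only [hsplit, add_apply, smul_apply, coe_innerSL_apply, EuclideanSpace.inner_single_right,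
    Real.ringHom_apply, one_mul, smul_eq_mul, pderivRadial, zsmul_eq_mul, map_add, map_mul,
    map_intCast, eval_X, hN]
  ring

theorem pd_congr_of_eventuallyEq (i : Fin 3) {f g : E3 → ℝ} {x : E3} (h : f =ᶠ[nhds x] g) :
    pd i f x = pd i g x := by
  rw [pd, pd, h.fderiv_eq]

theorem pd_pd_norm_zpow_mul_evalEuclidean (t : ℤ) (i : Fin 3) (Q : MvPolynomial (Fin 3) ℝ)
    {x : E3} (hx : x ≠ 0) :
    pd i (pd i (fun y => ‖y‖ ^ t * evalEuclidean Q y)) x =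
      ‖x‖ ^ (t - 4) * evalEuclidean (pderivRadial (t - 2) i (pderivRadial t i Q)) x := by
  have h : pd i (fun y => ‖y‖ ^ t * evalEuclidean Q y) =ᶠ[nhds x]
      fun y => ‖y‖ ^ (t - 2) * evalEuclidean (pderivRadial t i Q) y := by
    filter_upwards [isOpen_ne.mem_nhds hx] with y hy
    exact pd_norm_zpow_mul_evalEuclidean t i Q hy
  rw [pd_congr_of_eventuallyEq i h, pd_norm_zpow_mul_evalEuclidean _ _ _ hx]
  ring_nf

theorem lap_norm_zpow_mul_evalEuclidean (s : ℤ) {m : ℕ} {P : MvPolynomial (Fin 3) ℝ}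
    (hP : P.IsHomogeneous m) {x : E3} (hx : x ≠ 0) :
    lap (fun y => ‖y‖ ^ s * evalEuclidean P y) x =
      ‖x‖ ^ (s - 2) * evalEuclidean (twistedLaplacian s m P) x := by
  have hsplit : ‖x‖ ^ (s - 2) = ‖x‖ ^ (s - 4) * ‖x‖ ^ 2 := by
    rw [← zpow_natCast, ← zpow_add₀ (norm_ne_zero_iff.mpr hx)]
    ring_nf
  have hN := evalEuclidean_normSq x
  have hsum := congrArg (evalEuclidean · x) (sum_pderivRadial_pderivRadial s hP)
  simp only [lap, pd_pd_norm_zpow_mul_evalEuclidean _ _ _ hx, ← Finset.mul_sum]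
  simp only [evalEuclidean, map_sum, map_mul] at hN hsum ⊢
  rw [hsum, hN, hsplit]
  ring

theorem stmt_2_general (m : ℕ) (s : ℤ) (hodd : Odd |s|) (hms : 0 ≤ (m : ℤ) + s)
    (q : E3 → ℝ) (hq : IsHomogPoly m q) :
    ∃! p : E3 → ℝ, IsHomogPoly m p ∧
      ∀ x : E3, x ≠ 0 →
        lap (fun y => ‖y‖ ^ s * p y) x = ‖x‖ ^ (s - 2) * q x := by
  obtain ⟨Q, hQ, hqQ⟩ := hq
  obtain rfl : q = evalEuclidean Q := funext hqQ
  have hs : Odd s := odd_abs.mp hodd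
  have hdim : 3 ≤ Fintype.card (Fin 3) := by simp
  obtain ⟨P, hP, hTP⟩ := exists_twistedLaplacian_eq hdim hs hms hQ
  refine ⟨evalEuclidean P, ⟨⟨P, hP, fun _ => rfl⟩, fun x hx => ?_⟩, ?_⟩
  · rw [lap_norm_zpow_mul_evalEuclidean s hP hx, hTP]
  rintro _ ⟨⟨P', hP', hp'⟩, hlap⟩
  obtain rfl : _ = evalEuclidean P' := funext hp'
  have hTP' : twistedLaplacian s m P' = Q := eq_of_eval_eq_of_ne_zero fun v hv => by
    have hx : (WithLp.toLp 2 v : E3) ≠ 0 := by simpa using hv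
    exact mul_left_cancel₀ (zpow_ne_zero _ (norm_ne_zero_iff.mpr hx))
      ((lap_norm_zpow_mul_evalEuclidean s hP' hx).symm.trans (hlap _ hx))
  have hPP' : P' - P = 0 := eq_zero_of_twistedLaplacian_eq_zero hdim hs hms (hP'.sub hP)
    (by rw [map_sub, hTP, hTP', sub_self])
  rw [sub_eq_zero.mp hPP']

/-- for `s < 0` with `|s|` odd and `m + s ≥ 0`, the map
`p ↦ s(s+1+2m)p + ‖x‖²Δp` on homogeneous polynomials of degree `m` is bijective;
i.e. for every homogeneous polynomial `q` of degree `m` there is a unique homogeneous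
polynomial `p` of degree `m` with `Δ(‖x‖^s p) = ‖x‖^(s-2) q` on `ℝ³ \\ {0}`. -/
theorem stmt_2 (m : ℕ) (s : ℤ) (hs : s < 0) (hodd : Odd |s|) (hms : 0 ≤ (m : ℤ) + s)
    (q : E3 → ℝ) (hq : IsHomogPoly m q) :
    ∃! p : E3 → ℝ, IsHomogPoly m p ∧
      ∀ x : E3, x ≠ 0 →
        lap (fun y => ‖y‖ ^ s * p y) x = ‖x‖ ^ (s - 2) * q x :=
  stmt_2_general m s hodd hms q hq
end
end

section
/- Let P^a, J^a, Q^a ∈ ℝ³ and A ∈ ℝ, and let Ψ^{ab} = Ψ_P^{ab} + Ψ_J^{ab} + Ψ_A^{ab} + Ψ_Q^{ab} on ℝ³ \ {0} (with the tensors as in the context). Then Ψ^{ab} is symmetric, trace-free (δ_{ab} Ψ^{ab} = 0), and divergence-free with respect to the Euclidean metric: Σ_{a=1}^{3} ∂_a Ψ^{ab}(x) = 0 for all x ∈ ℝ³ with x ≠ 0 and each b = 1, 2, 3. -/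
noncomputable section

/-- The Kronecker delta on `Fin 3`. -/
def kron (a b : Fin 3) : ℝ := if a = b then 1 else 0

/-- The alternating (Levi-Civita) symbol on `Fin 3`. -/
def levi (i j k : Fin 3) : ℝ :=
  if (i, j, k) = (0, 1, 2) ∨ (i, j, k) = (1, 2, 0) ∨ (i, j, k) = (2, 0, 1) then 1
  else if (i, j, k) = (0, 2, 1) ∨ (i, j, k) = (2, 1, 0) ∨ (i, j, k) = (1, 0, 2) then -1
  else 0

/-- The radial unit normal `nⁱ = xⁱ/‖x‖` (junk value at the origin). -/
def nv (x : E3) (i : Fin 3) : ℝ := x i / ‖x‖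

/-- `Ψ_P^{ab} = (3/(2r⁴))(−Pᵃnᵇ − Pᵇnᵃ − (δᵃᵇ − 5nᵃnᵇ) P·n)`. -/
def PsiP (P : Fin 3 → ℝ) (x : E3) (a b : Fin 3) : ℝ :=
  3 / (2 * ‖x‖ ^ 4) *
    (-(P a) * nv x b - P b * nv x a -
      (kron a b - 5 * nv x a * nv x b) * ∑ c, P c * nv x c)

/-- `Ψ_J^{ab} = (3/r³)(nᵃ εᵇᶜᵈ J_c n_d + nᵇ εᵃᶜᵈ J_c n_d)`. -/
def PsiJ (J : Fin 3 → ℝ) (x : E3) (a b : Fin 3) : ℝ :=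
  3 / ‖x‖ ^ 3 *
    ((∑ c, ∑ d, nv x a * levi b c d * J c * nv x d) +
      (∑ c, ∑ d, nv x b * levi a c d * J c * nv x d))

/-- `Ψ_A^{ab} = (A/r³)(3nᵃnᵇ − δᵃᵇ)`. -/
def PsiA (A : ℝ) (x : E3) (a b : Fin 3) : ℝ :=
  A / ‖x‖ ^ 3 * (3 * nv x a * nv x b - kron a b)

/-- `Ψ_Q^{ab} = (3/(2r²))(Qᵃnᵇ + Qᵇnᵃ − (δᵃᵇ − nᵃnᵇ) Q·n)`. -/
def PsiQ (Q : Fin 3 → ℝ) (x : E3) (a b : Fin 3) : ℝ :=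
  3 / (2 * ‖x‖ ^ 2) *
    (Q a * nv x b + Q b * nv x a -
      (kron a b - nv x a * nv x b) * ∑ c, Q c * nv x c)

/-- `Ψ^{ab} = Ψ_P^{ab} + Ψ_J^{ab} + Ψ_A^{ab} + Ψ_Q^{ab}`. -/
def PsiTot (P J Q : Fin 3 → ℝ) (A : ℝ) (x : E3) (a b : Fin 3) : ℝ :=
  PsiP P x a b + PsiJ J x a b + PsiA A x a b + PsiQ Q x a b

/-! Each of the four tensors is `r ^ k • S` with `S` a polynomial tensor field (`k = -7` for `Ψ_P`,
`k = -5` for the others). Since `∂ₐ rᵏ = k rᵏ⁻² xₐ`, the divergence of `rᵏ S` is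
`rᵏ⁻² (r² ∂ₐ Sᵃᵇ + k xₐ Sᵃᵇ)`, so all three properties reduce to polynomial identities, checked
coordinatewise. They are linear in the tensor, hence pass to the sum `Ψ`. -/

open Finset

/-- Mathlib's `DifferentiableAt.norm_sq` takes the scalar field explicitly, which `fun_prop`
cannot supply. -/
@[fun_prop]
lemma DifferentiableAt.norm_sq' {G F : Type*} [NormedAddCommGroup G] [NormedSpace ℝ G]
    [NormedAddCommGroup F] [InnerProductSpace ℝ F] {f : G → F} {x : G}
    (hf : DifferentiableAt ℝ f x) : DifferentiableAt ℝ (fun y => ‖f y‖ ^ 2) x :=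
  hf.norm_sq ℝ

lemma hasFDerivAt_norm {F : Type*} [NormedAddCommGroup F] [InnerProductSpace ℝ F] {x : F}
    (hx : x ≠ 0) : HasFDerivAt (fun y : F => ‖y‖) (‖x‖⁻¹ • innerSL ℝ x) x := by
  have h := (Real.hasDerivAt_sqrt (by positivity : ‖x‖ ^ 2 ≠ 0)).comp_hasFDerivAt x
    (hasStrictFDerivAt_norm_sq x).hasFDerivAt
  simp only [Function.comp_def, Real.sqrt_sq (norm_nonneg _)] at h
  refine h.congr_fderiv ?_
  ext v
  simp only [one_div, mul_inv_rev, smul_apply, coe_innerSL_apply, nsmul_eq_mul,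
    Nat.cast_ofNat, smul_eq_mul]
  field_simp

lemma norm_sq_eq_sum_sq (x : E3) : ‖x‖ ^ 2 = x 0 ^ 2 + x 1 ^ 2 + x 2 ^ 2 := by
  simp [EuclideanSpace.norm_sq_eq, Fin.sum_univ_three]

section PartialDerivative

variable {f g : E3 → ℝ} {x : E3} (i : Fin 3)

lemma pd_const (c : ℝ) : pd i (fun _ => c) x = 0 := by
  simp [pd]

lemma pd_add (hf : DifferentiableAt ℝ f x) (hg : DifferentiableAt ℝ g x) :
    pd i (fun y => f y + g y) x = pd i f x + pd i g x := by
  simp [pd, fderiv_fun_add hf hg]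

lemma pd_sub (hf : DifferentiableAt ℝ f x) (hg : DifferentiableAt ℝ g x) :
    pd i (fun y => f y - g y) x = pd i f x - pd i g x := by
  simp [pd, fderiv_fun_sub hf hg]

lemma pd_mul (hf : DifferentiableAt ℝ f x) (hg : DifferentiableAt ℝ g x) :
    pd i (fun y => f y * g y) x = pd i f x * g x + f x * pd i g x := by
  simp only [pd, fderiv_fun_mul hf hg, add_apply, smul_apply, smul_eq_mul]
  ring

lemma pd_coord (a : Fin 3) : pd i (fun y : E3 => y a) x = kron a i := by
  have h : HasFDerivAt (fun y : E3 => y a) (EuclideanSpace.proj (𝕜 := ℝ) a : E3 →L[ℝ] ℝ) x :=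
    (EuclideanSpace.proj (𝕜 := ℝ) a : E3 →L[ℝ] ℝ).hasFDerivAt
  simp [pd, h.fderiv, kron]

lemma pd_norm_sq : pd i (fun y : E3 => ‖y‖ ^ 2) x = 2 * x i := by
  simp [pd, fderiv_norm_sq_apply, EuclideanSpace.inner_single_right]

lemma pd_norm_zpow (hx : x ≠ 0) (k : ℤ) :
    pd i (fun y : E3 => ‖y‖ ^ k) x = k * ‖x‖ ^ (k - 2) * x i := by
  have h := (hasDerivAt_zpow k ‖x‖ (Or.inl (norm_ne_zero_iff.mpr hx))).comp_hasFDerivAt x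
    (hasFDerivAt_norm hx)
  rw [pd, show (fun y : E3 => ‖y‖ ^ k) = (fun t : ℝ => t ^ k) ∘ norm from rfl, h.fderiv]
  simp only [smul_apply, coe_innerSL_apply, EuclideanSpace.inner_single_right,
    Real.ringHom_apply, one_mul, smul_eq_mul]
  rw [zpow_sub₀ (norm_ne_zero_iff.mpr hx), zpow_sub₀ (norm_ne_zero_iff.mpr hx)]
  field_simp

lemma differentiableAt_norm_zpow (hx : x ≠ 0) (k : ℤ) :
    DifferentiableAt ℝ (fun y : E3 => ‖y‖ ^ k) x :=
  (hasFDerivAt_norm hx).differentiableAt.zpow (Or.inl (norm_ne_zero_iff.mpr hx))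

end PartialDerivative

/-- Differentiability off the origin is built in so that the notion is closed under addition. -/
structure IsTransverseTraceless (T : E3 → Fin 3 → Fin 3 → ℝ) : Prop where
  differentiableAt : ∀ x ≠ 0, ∀ a b, DifferentiableAt ℝ (fun y => T y a b) x
  symm : ∀ x ≠ 0, ∀ a b, T x a b = T x b a
  trace_eq_zero : ∀ x ≠ 0, ∑ a, T x a a = 0
  div_eq_zero : ∀ x ≠ 0, ∀ b, ∑ a, pd a (fun y => T y a b) x = 0

namespace IsTransverseTraceless

variable {T U : E3 → Fin 3 → Fin 3 → ℝ}

theorem add (hT : IsTransverseTraceless T) (hU : IsTransverseTraceless U) :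
    IsTransverseTraceless (T + U) where
  differentiableAt x hx a b := (hT.differentiableAt x hx a b).add (hU.differentiableAt x hx a b)
  symm x hx a b := by simp [hT.symm x hx a b, hU.symm x hx a b]
  trace_eq_zero x hx := by simp [sum_add_distrib, hT.trace_eq_zero x hx, hU.trace_eq_zero x hx]
  div_eq_zero x hx b := by
    simp only [Pi.add_apply,
      pd_add _ (hT.differentiableAt x hx _ b) (hU.differentiableAt x hx _ b), sum_add_distrib,
      hT.div_eq_zero x hx b, hU.div_eq_zero x hx b, add_zero]

end IsTransverseTraceless

theorem isTransverseTraceless_norm_zpow_mul {S : E3 → Fin 3 → Fin 3 → ℝ} (k : ℤ)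
    (hdiff : ∀ x ≠ 0, ∀ a b, DifferentiableAt ℝ (fun y => S y a b) x)
    (hsymm : ∀ x ≠ 0, ∀ a b, S x a b = S x b a)
    (htrace : ∀ x ≠ 0, ∑ a, S x a a = 0)
    (hdiv : ∀ x ≠ 0, ∀ b,
      ‖x‖ ^ 2 * ∑ a, pd a (fun y => S y a b) x + k * ∑ a, x a * S x a b = 0) :
    IsTransverseTraceless (fun y a b => ‖y‖ ^ k * S y a b) where
  differentiableAt x hx a b := (differentiableAt_norm_zpow hx k).mul (hdiff x hx a b)
  symm x hx a b := by rw [hsymm x hx a b]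
  trace_eq_zero x hx := by rw [← mul_sum, htrace x hx, mul_zero]
  div_eq_zero x hx b := by
    have hr : ‖x‖ ^ k = ‖x‖ ^ (k - 2) * ‖x‖ ^ 2 := by
      rw [← zpow_natCast, ← zpow_add₀ (norm_ne_zero_iff.mpr hx)]
      norm_num
    calc ∑ a, pd a (fun y => ‖y‖ ^ k * S y a b) x
        = ∑ a, (k * ‖x‖ ^ (k - 2) * x a * S x a b + ‖x‖ ^ k * pd a (fun y => S y a b) x) := by
          refine sum_congr rfl fun a _ => ?_
          rw [pd_mul _ (differentiableAt_norm_zpow hx k) (hdiff x hx a b), pd_norm_zpow _ hx]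
      _ = ‖x‖ ^ (k - 2) *
            (‖x‖ ^ 2 * ∑ a, pd a (fun y => S y a b) x + k * ∑ a, x a * S x a b) := by
          simp only [sum_add_distrib, hr, mul_add, mul_sum]
          rw [add_comm]
          congr 1 <;> exact sum_congr rfl fun a _ => by ring
      _ = 0 := by rw [hdiv x hx b, mul_zero]
def psiPNum (P : Fin 3 → ℝ) (y : E3) (a b : Fin 3) : ℝ :=
  3 / 2 * (5 * y a * y b * ∑ c, P c * y c -
    ‖y‖ ^ 2 * (P a * y b + P b * y a + kron a b * ∑ c, P c * y c))

-- Both sides are junk `0` at the origin, so the identity holds on all of `E3`.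
lemma PsiP_eq (P : Fin 3 → ℝ) : PsiP P = fun y a b => ‖y‖ ^ (-7 : ℤ) * psiPNum P y a b := by
  funext y a b
  rcases eq_or_ne y 0 with rfl | hy
  · simp [PsiP, psiPNum, nv]
  · have hr : ‖y‖ ≠ 0 := norm_ne_zero_iff.mpr hy
    simp only [PsiP, psiPNum, nv, Fin.sum_univ_three, zpow_neg, zpow_ofNat]
    field_simp
    ring

lemma isTransverseTraceless_PsiP (P : Fin 3 → ℝ) : IsTransverseTraceless (PsiP P) := by
  rw [PsiP_eq]
  refine isTransverseTraceless_norm_zpow_mul _ (fun x _ a b => by unfold psiPNum; fun_prop)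
    (fun x _ a b => ?_) (fun x _ => ?_) (fun x _ b => ?_)
  · simp only [psiPNum, kron, eq_comm]; ring
  · simp [psiPNum, kron, Fin.sum_univ_three, norm_sq_eq_sum_sq]; ring
  · fin_cases b <;>
    simp (disch := fun_prop) only [psiPNum, Fin.sum_univ_three, pd_add, pd_sub, pd_mul,
      pd_coord, pd_norm_sq, pd_const, kron, Fin.reduceFinMk, Fin.isValue,
      Fin.reduceEq, ite_true, ite_false] <;>
    simp only [norm_sq_eq_sum_sq] <;> ring

def psiJNum (J : Fin 3 → ℝ) (y : E3) (a b : Fin 3) : ℝ :=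
  3 * (y a * ∑ c, ∑ d, levi b c d * J c * y d + y b * ∑ c, ∑ d, levi a c d * J c * y d)

lemma PsiJ_eq (J : Fin 3 → ℝ) : PsiJ J = fun y a b => ‖y‖ ^ (-5 : ℤ) * psiJNum J y a b := by
  funext y a b
  rcases eq_or_ne y 0 with rfl | hy
  · simp [PsiJ, psiJNum, nv]
  · have hr : ‖y‖ ≠ 0 := norm_ne_zero_iff.mpr hy
    simp only [PsiJ, psiJNum, nv, Fin.sum_univ_three, zpow_neg, zpow_ofNat]
    field_simp

lemma isTransverseTraceless_PsiJ (J : Fin 3 → ℝ) : IsTransverseTraceless (PsiJ J) := by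
  rw [PsiJ_eq]
  refine isTransverseTraceless_norm_zpow_mul _ (fun x _ a b => by unfold psiJNum; fun_prop)
    (fun x _ a b => ?_) (fun x _ => ?_) (fun x _ b => ?_)
  · simp only [psiJNum]; ring
  · simp [psiJNum, levi, Fin.sum_univ_three]; ring
  · fin_cases b <;>
    simp (disch := fun_prop) only [psiJNum, Fin.sum_univ_three, pd_add, pd_mul, pd_coord,
      pd_const, kron, levi, Fin.reduceFinMk, Fin.isValue, Fin.reduceEq, ite_true, ite_false,
      Prod.mk.injEq, and_true, and_false, true_and, false_and, or_false, false_or] <;>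
    simp only [norm_sq_eq_sum_sq] <;> ring

def psiANum (A : ℝ) (y : E3) (a b : Fin 3) : ℝ :=
  A * (3 * y a * y b - kron a b * ‖y‖ ^ 2)

lemma PsiA_eq (A : ℝ) : PsiA A = fun y a b => ‖y‖ ^ (-5 : ℤ) * psiANum A y a b := by
  funext y a b
  rcases eq_or_ne y 0 with rfl | hy
  · simp [PsiA, psiANum, nv]
  · have hr : ‖y‖ ≠ 0 := norm_ne_zero_iff.mpr hy
    simp only [PsiA, psiANum, nv, zpow_neg, zpow_ofNat]
    field_simp

lemma isTransverseTraceless_PsiA (A : ℝ) : IsTransverseTraceless (PsiA A) := by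
  rw [PsiA_eq]
  refine isTransverseTraceless_norm_zpow_mul _ (fun x _ a b => by unfold psiANum; fun_prop)
    (fun x _ a b => ?_) (fun x _ => ?_) (fun x _ b => ?_)
  · simp only [psiANum, kron, eq_comm]; ring
  · simp [psiANum, kron, Fin.sum_univ_three, norm_sq_eq_sum_sq]; ring
  · fin_cases b <;>
    simp (disch := fun_prop) only [psiANum, Fin.sum_univ_three, pd_sub, pd_mul,
      pd_coord, pd_norm_sq, pd_const, kron, Fin.reduceFinMk, Fin.isValue,
      Fin.reduceEq, ite_true, ite_false] <;>
    simp only [norm_sq_eq_sum_sq] <;> ring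

def psiQNum (Q : Fin 3 → ℝ) (y : E3) (a b : Fin 3) : ℝ :=
  3 / 2 * (‖y‖ ^ 2 * (Q a * y b + Q b * y a - kron a b * ∑ c, Q c * y c) +
    y a * y b * ∑ c, Q c * y c)

lemma PsiQ_eq (Q : Fin 3 → ℝ) : PsiQ Q = fun y a b => ‖y‖ ^ (-5 : ℤ) * psiQNum Q y a b := by
  funext y a b
  rcases eq_or_ne y 0 with rfl | hy
  · simp [PsiQ, psiQNum, nv]
  · have hr : ‖y‖ ≠ 0 := norm_ne_zero_iff.mpr hy
    simp only [PsiQ, psiQNum, nv, Fin.sum_univ_three, zpow_neg, zpow_ofNat]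
    field_simp
    ring

lemma isTransverseTraceless_PsiQ (Q : Fin 3 → ℝ) : IsTransverseTraceless (PsiQ Q) := by
  rw [PsiQ_eq]
  refine isTransverseTraceless_norm_zpow_mul _ (fun x _ a b => by unfold psiQNum; fun_prop)
    (fun x _ a b => ?_) (fun x _ => ?_) (fun x _ b => ?_)
  · simp only [psiQNum, kron, eq_comm]; ring
  · simp [psiQNum, kron, Fin.sum_univ_three, norm_sq_eq_sum_sq]; ring
  · fin_cases b <;>
    simp (disch := fun_prop) only [psiQNum, Fin.sum_univ_three, pd_add, pd_sub, pd_mul,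
      pd_coord, pd_norm_sq, pd_const, kron, Fin.reduceFinMk, Fin.isValue,
      Fin.reduceEq, ite_true, ite_false] <;>
    simp only [norm_sq_eq_sum_sq] <;> ring

/-- `Ψ = Ψ_P + Ψ_J + Ψ_A + Ψ_Q` is symmetric, trace-free and
divergence-free with respect to the Euclidean metric on `ℝ³ \\ {0}`. -/
theorem stmt_16 (P J Q : Fin 3 → ℝ) (A : ℝ) :
    (∀ x : E3, x ≠ 0 → ∀ a b, PsiTot P J Q A x a b = PsiTot P J Q A x b a) ∧
    (∀ x : E3, x ≠ 0 → ∑ a, PsiTot P J Q A x a a = 0) ∧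
    (∀ x : E3, x ≠ 0 → ∀ b : Fin 3,
      ∑ a, pd a (fun y => PsiTot P J Q A y a b) x = 0) := by
  have h : IsTransverseTraceless (PsiTot P J Q A) :=
    (((isTransverseTraceless_PsiP P).add (isTransverseTraceless_PsiJ J)).add
      (isTransverseTraceless_PsiA A)).add (isTransverseTraceless_PsiQ Q)
  exact ⟨h.symm, h.trace_eq_zero, h.div_eq_zero⟩
end
end
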